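/- A point (x, y) ∈ (0,1)^4 × (0,1) is a fixed point of the gradient-ascent vector field F — i.e. F_i(x,y) = 0 for i = 1,...,4 and F_5(x,y) = 0 — if and only if x^st(x,y) = x^o and y = y^o. -/

import Mathlib

/-- Δ(x,y) := x̃1·y + x̃2·ỹ + x3·y + x4·ỹ -/
noncomputable def Del (x1 x2 x3 x4 y : ℝ) : ℝ :=
  (1 - x1) * y + (1 - x2) * (1 - y) + x3 * y + x4 * (1 - y)

/-- Marginalized strategy x^st(x,y) := (x3·y + x4·ỹ)/Δ(x,y). -/
noncomputable def xst (x1 x2 x3 x4 y : ℝ) : ℝ :=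
  (x3 * y + x4 * (1 - y)) / Del x1 x2 x3 x4 y

/-- Stationary payoff u^st(x,y). -/
noncomputable def ust (u1 u2 u3 u4 x1 x2 x3 x4 y : ℝ) : ℝ :=
  xst x1 x2 x3 x4 y * y * u1 + xst x1 x2 x3 x4 y * (1 - y) * u2 +
  (1 - xst x1 x2 x3 x4 y) * y * u3 + (1 - xst x1 x2 x3 x4 y) * (1 - y) * u4

/-- Partial derivative of a function of z = (x1,x2,x3,x4,y) with respect to the j-th
coordinate. -/
noncomputable def pderiv5 (f : (Fin 5 → ℝ) → ℝ) (z : Fin 5 → ℝ) (j : Fin 5) : ℝ :=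
  deriv (fun t => f (Function.update z j t)) (z j)

/-- x^st as a function of z = (x1,x2,x3,x4,y). -/
noncomputable def xstZ (z : Fin 5 → ℝ) : ℝ := xst (z 0) (z 1) (z 2) (z 3) (z 4)

/-- u^st as a function of z = (x1,x2,x3,x4,y). -/
noncomputable def ustZ (u1 u2 u3 u4 : ℝ) (z : Fin 5 → ℝ) : ℝ :=
  ust u1 u2 u3 u4 (z 0) (z 1) (z 2) (z 3) (z 4)

/-- The gradient-ascent vector field: F_i = x_i(1−x_i)·∂u^st/∂x_i for i = 1,…,4 and
F_5 = −y(1−y)·∂u^st/∂y. -/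
noncomputable def Fvec (u1 u2 u3 u4 : ℝ) (z : Fin 5 → ℝ) (i : Fin 5) : ℝ :=
  if i = 4 then -(z 4 * (1 - z 4) * pderiv5 (ustZ u1 u2 u3 u4) z 4)
  else z i * (1 - z i) * pderiv5 (ustZ u1 u2 u3 u4) z i

/-- The Jacobian matrix of the gradient-ascent vector field at z. -/
noncomputable def Jmat (u1 u2 u3 u4 : ℝ) (z : Fin 5 → ℝ) : Matrix (Fin 5) (Fin 5) ℝ :=
  Matrix.of fun i j => pderiv5 (fun w => Fvec u1 u2 u3 u4 w i) z j

/-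
`rowGain y` and `colGain p` are the differences between the payoffs `u` of the two pure actions
of the row player against `y`, and of the column player against `p`. Since
`u^st = x^st · rowGain y + y u₃ + (1 - y) u₄`, we get `∂u^st/∂xᵢ = ∂x^st/∂xᵢ · rowGain y` and
`∂u^st/∂y = ∂x^st/∂y · rowGain y + colGain x^st`. As `∂x^st/∂x₁ = (x₃y + x₄ỹ) y / Δ² > 0`,
`F₁` vanishes iff `rowGain y = 0`, and then `F₅` vanishes iff `colGain x^st = 0`. Both gains are
affine with slope `D`, with zeros `y^o` and `x^o`.
-/

open Function

theorem DifferentiableAt.comp_update {ι : Type*} [Fintype ι] [DecidableEq ι]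
    {f : (ι → ℝ) → ℝ} {z : ι → ℝ} (hf : DifferentiableAt ℝ f z) (j : ι) :
    DifferentiableAt ℝ (fun t => f (update z j t)) (z j) :=
  DifferentiableAt.comp (z j) (by rwa [update_eq_self])
    (hasDerivAt_update z j (z j)).differentiableAt

theorem Del_pos {x1 x2 x3 x4 y : ℝ} (hx1 : x1 < 1) (hx2 : x2 < 1) (hx3 : 0 ≤ x3) (hx4 : 0 ≤ x4)
    (hy : y ∈ Set.Ioo (0 : ℝ) 1) : 0 < Del x1 x2 x3 x4 y := by
  obtain ⟨hy0, hy1⟩ := hy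
  have := mul_pos (sub_pos.2 hx1) hy0
  have := mul_pos (sub_pos.2 hx2) (sub_pos.2 hy1)
  have := mul_nonneg hx3 hy0.le
  have := mul_nonneg hx4 (sub_pos.2 hy1).le
  unfold Del
  linarith

theorem differentiableAt_xstZ {z : Fin 5 → ℝ} (hz : Del (z 0) (z 1) (z 2) (z 3) (z 4) ≠ 0) :
    DifferentiableAt ℝ xstZ z := by
  unfold xstZ xst
  unfold Del at *
  fun_prop (disch := exact hz)

theorem pderiv5_xstZ_zero {z : Fin 5 → ℝ} (hz : Del (z 0) (z 1) (z 2) (z 3) (z 4) ≠ 0) :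
    pderiv5 xstZ z 0 =
      (z 2 * z 4 + z 3 * (1 - z 4)) * z 4 / Del (z 0) (z 1) (z 2) (z 3) (z 4) ^ 2 := by
  have hDel : HasDerivAt (fun t => Del t (z 1) (z 2) (z 3) (z 4)) (-z 4) (z 0) := by
    unfold Del
    exact ((((hasDerivAt_id _).const_sub 1).mul_const _).add_const _ |>.add_const _
      |>.add_const _).congr_deriv (by ring)
  simp only [pderiv5, xstZ, xst, update_self, ne_eq, Fin.reduceEq, not_false_eq_true, update_of_ne]
  exact ((hasDerivAt_const (z 0) _).div hDel hz).deriv.trans (by ring)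

def rowGain (u1 u2 u3 u4 y : ℝ) : ℝ := y * (u1 - u3) + (1 - y) * (u2 - u4)

def colGain (u1 u2 u3 u4 p : ℝ) : ℝ := p * (u1 - u2) + (1 - p) * (u3 - u4)

section

variable (u1 u2 u3 u4 : ℝ)

theorem rowGain_eq_zero_iff (hD : u1 - u2 - u3 + u4 ≠ 0) (y : ℝ) :
    rowGain u1 u2 u3 u4 y = 0 ↔ y = (u4 - u2) / (u1 - u2 - u3 + u4) := by
  rw [eq_div_iff hD, rowGain]
  constructor <;> intro h <;> linear_combination h

theorem colGain_eq_zero_iff (hD : u1 - u2 - u3 + u4 ≠ 0) (p : ℝ) :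
    colGain u1 u2 u3 u4 p = 0 ↔ p = (u4 - u3) / (u1 - u2 - u3 + u4) := by
  rw [eq_div_iff hD, colGain]
  constructor <;> intro h <;> linear_combination h

theorem ustZ_eq_xstZ_mul_rowGain (z : Fin 5 → ℝ) :
    ustZ u1 u2 u3 u4 z = xstZ z * rowGain u1 u2 u3 u4 (z 4) + (z 4 * u3 + (1 - z 4) * u4) := by
  simp only [ustZ, xstZ, ust, rowGain]
  ring

theorem pderiv5_ustZ_of_ne_four {z : Fin 5 → ℝ} (hz : DifferentiableAt ℝ xstZ z) {j : Fin 5}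
    (hj : j ≠ 4) :
    pderiv5 (ustZ u1 u2 u3 u4) z j = pderiv5 xstZ z j * rowGain u1 u2 u3 u4 (z 4) := by
  simp only [pderiv5, ustZ_eq_xstZ_mul_rowGain, update_of_ne hj.symm]
  rw [deriv_add_const, deriv_mul_const (hz.comp_update j)]

theorem pderiv5_ustZ_four {z : Fin 5 → ℝ} (hz : DifferentiableAt ℝ xstZ z) :
    pderiv5 (ustZ u1 u2 u3 u4) z 4 =
      pderiv5 xstZ z 4 * rowGain u1 u2 u3 u4 (z 4) + colGain u1 u2 u3 u4 (xstZ z) := by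
  have hrow : HasDerivAt (rowGain u1 u2 u3 u4) (u1 - u3 - (u2 - u4)) (z 4) := by
    unfold rowGain
    exact (((hasDerivAt_id _).mul_const _).add
      (((hasDerivAt_id _).const_sub 1).mul_const _)).congr_deriv (by ring)
  have hconst : HasDerivAt (fun t => t * u3 + (1 - t) * u4) (u3 - u4) (z 4) :=
    (((hasDerivAt_id _).mul_const _).add
      (((hasDerivAt_id _).const_sub 1).mul_const _)).congr_deriv (by ring)
  have hline := (hz.comp_update 4).hasDerivAt
  simp only [pderiv5, ustZ_eq_xstZ_mul_rowGain, update_self]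
  refine ((hline.mul hrow).add hconst).deriv.trans ?_
  rw [update_eq_self, colGain]
  ring

theorem forall_Fvec_eq_zero_iff {z : Fin 5 → ℝ}
    (hz : ∀ i, z i ∈ Set.Ioo (0 : ℝ) 1) :
    (∀ i, Fvec u1 u2 u3 u4 z i = 0) ↔
      rowGain u1 u2 u3 u4 (z 4) = 0 ∧ colGain u1 u2 u3 u4 (xstZ z) = 0 := by
  have hΔ := Del_pos (hz 0).2 (hz 1).2 (hz 2).1.le (hz 3).1.le (hz 4)
  have hdiff := differentiableAt_xstZ hΔ.ne'
  constructor
  · intro h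
    have hrow : rowGain u1 u2 u3 u4 (z 4) = 0 := by
      have h0 := h 0
      rw [Fvec, if_neg (by decide), pderiv5_ustZ_of_ne_four u1 u2 u3 u4 hdiff (by decide),
        pderiv5_xstZ_zero hΔ.ne', ← mul_assoc] at h0
      have hN : 0 < z 2 * z 4 + z 3 * (1 - z 4) :=
        add_pos (mul_pos (hz 2).1 (hz 4).1) (mul_pos (hz 3).1 (sub_pos.2 (hz 4).2))
      exact (mul_eq_zero.1 h0).resolve_left (mul_pos (mul_pos (hz 0).1 (sub_pos.2 (hz 0).2))
        (div_pos (mul_pos hN (hz 4).1) (pow_pos hΔ 2))).ne'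
    refine ⟨hrow, ?_⟩
    have h4 := h 4
    rw [Fvec, if_pos rfl, pderiv5_ustZ_four u1 u2 u3 u4 hdiff, hrow, mul_zero, zero_add,
      neg_eq_zero] at h4
    exact (mul_eq_zero.1 h4).resolve_left (mul_pos (hz 4).1 (sub_pos.2 (hz 4).2)).ne'
  · rintro ⟨hrow, hcol⟩ i
    by_cases hi : i = 4
    · subst hi
      rw [Fvec, if_pos rfl, pderiv5_ustZ_four u1 u2 u3 u4 hdiff, hrow, hcol]
      ring
    · rw [Fvec, if_neg hi, pderiv5_ustZ_of_ne_four u1 u2 u3 u4 hdiff hi, hrow]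
      ring

end

theorem stmt15_general (u1 u2 u3 u4 : ℝ)
    (h12 : u1 > u2) (h43 : u4 > u3)
    (x1 x2 x3 x4 y : ℝ)
    (h1 : x1 ∈ Set.Ioo (0 : ℝ) 1) (h2 : x2 ∈ Set.Ioo (0 : ℝ) 1)
    (h3 : x3 ∈ Set.Ioo (0 : ℝ) 1) (h4 : x4 ∈ Set.Ioo (0 : ℝ) 1)
    (hy : y ∈ Set.Ioo (0 : ℝ) 1) :
    (∀ i : Fin 5, Fvec u1 u2 u3 u4 ![x1, x2, x3, x4, y] i = 0) ↔
      (xst x1 x2 x3 x4 y = (u4 - u3) / (u1 - u2 - u3 + u4) ∧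
        y = (u4 - u2) / (u1 - u2 - u3 + u4)) := by
  have hD : u1 - u2 - u3 + u4 ≠ 0 := (by linarith : 0 < u1 - u2 - u3 + u4).ne'
  have hz : ∀ i, ![x1, x2, x3, x4, y] i ∈ Set.Ioo (0 : ℝ) 1 := by
    intro i
    fin_cases i <;> assumption
  rw [forall_Fvec_eq_zero_iff u1 u2 u3 u4 hz, rowGain_eq_zero_iff _ _ _ _ hD,
    colGain_eq_zero_iff _ _ _ _ hD]
  exact and_comm

/-- (x,y) is a fixed point of the gradient-ascent field iff
x^st(x,y) = x^o and y = y^o. -/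
theorem stmt15 (u1 u2 u3 u4 : ℝ)
    (h12 : u1 > u2) (h13 : u1 > u3) (h42 : u4 > u2) (h43 : u4 > u3)
    (x1 x2 x3 x4 y : ℝ)
    (h1 : x1 ∈ Set.Ioo (0 : ℝ) 1) (h2 : x2 ∈ Set.Ioo (0 : ℝ) 1)
    (h3 : x3 ∈ Set.Ioo (0 : ℝ) 1) (h4 : x4 ∈ Set.Ioo (0 : ℝ) 1)
    (hy : y ∈ Set.Ioo (0 : ℝ) 1) :
    (∀ i : Fin 5, Fvec u1 u2 u3 u4 ![x1, x2, x3, x4, y] i = 0) ↔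
      (xst x1 x2 x3 x4 y = (u4 - u3) / (u1 - u2 - u3 + u4) ∧
        y = (u4 - u2) / (u1 - u2 - u3 + u4)) :=
  stmt15_general u1 u2 u3 u4 h12 h43 x1 x2 x3 x4 y h1 h2 h3 h4 hy
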